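/- Let d be a positive integer and let n = 4d + 3. For i ∈ {1,2}, let 𝒱_i be the family of all subsets of [n] of cardinality d+i+1 that are not contained in any interval [A, f_4(A)] with A a d-subset of [n]. Then there exists an injection φ : 𝒱₁ → 𝒱₂ such that S ⊆ φ(S) for every S ∈ 𝒱₁. -/

import Mathlib

open Fin.NatCast in
/-- The clockwise arc of `l` consecutive points on the circular representation of `[n]`
(modelled as `Fin n`), starting at `s`. -/
def cArc (n : ℕ) [NeZero n] (s : Fin n) (l : ℕ) : Finset (Fin n) :=
  (Finset.range l).image (fun t : ℕ => s + (t : Fin n))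

/-- The interval `[A,B] = {C : A ⊆ C ⊆ B}` in the Boolean lattice of subsets of `[n]`. -/
def fInterval {n : ℕ} (A B : Finset (Fin n)) : Finset (Finset (Fin n)) :=
  B.powerset.filter (fun C => A ⊆ C)

open Fin.NatCast in
/-- A block structure of `A ⊆ [n]` with respect to the density `δ`: a partition of the
circular representation of `[n]` into clockwise-consecutive blocks
`B₁, G₁, B₂, G₂, …, B_k, G_k` satisfying conditions (i)-(iv). Block `Bᵢ` is the arc of
length `blen i` starting at `bstart i`, and the gap `Gᵢ` is the arc of length `glen i`
immediately following `Bᵢ`. -/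
structure BlockStructure (n : ℕ) [NeZero n] (δ : ℝ) (A : Finset (Fin n)) where
  k : ℕ
  kpos : 0 < k
  bstart : Fin k → Fin n
  blen : Fin k → ℕ
  glen : Fin k → ℕ
  blen_pos : ∀ i, 0 < blen i
  /-- the blocks and gaps are clockwise-consecutive: `B_{i+1}` starts right after `Gᵢ` -/
  consec : ∀ i : Fin k,
    bstart ⟨(i.val + 1) % k, Nat.mod_lt _ kpos⟩ = bstart i + ((blen i + glen i : ℕ) : Fin n)
  /-- (i) the first element of each block lies in `A` -/
  start_mem : ∀ i, bstart i ∈ A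
  /-- (ii) the gaps contain no element of `A` -/
  gap_inter : ∀ i, Disjoint (cArc n (bstart i + (blen i : Fin n)) (glen i)) A
  /-- the blocks and gaps cover `[n]` -/
  cover : ∀ x : Fin n,
    (∃ i, x ∈ cArc n (bstart i) (blen i)) ∨
      (∃ i, x ∈ cArc n (bstart i + (blen i : Fin n)) (glen i))
  /-- distinct blocks are disjoint -/
  block_disj : ∀ i j, i ≠ j →
    Disjoint (cArc n (bstart i) (blen i)) (cArc n (bstart j) (blen j))
  /-- distinct gaps are disjoint -/
  gap_disj : ∀ i j, i ≠ j →
    Disjoint (cArc n (bstart i + (blen i : Fin n)) (glen i))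
      (cArc n (bstart j + (blen j : Fin n)) (glen j))
  /-- blocks are disjoint from gaps -/
  block_gap_disj : ∀ i j,
    Disjoint (cArc n (bstart i) (blen i)) (cArc n (bstart j + (blen j : Fin n)) (glen j))
  /-- (iii) lower density bound: `δ·|A ∩ Bᵢ| − 1 < |Bᵢ|` -/
  density_lb : ∀ i,
    δ * ((A ∩ cArc n (bstart i) (blen i)).card : ℝ) - 1 < ((cArc n (bstart i) (blen i)).card : ℝ)
  /-- (iii) upper density bound: `|Bᵢ| ≤ δ·|A ∩ Bᵢ|` -/
  density_ub : ∀ i,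
    ((cArc n (bstart i) (blen i)).card : ℝ) ≤ δ * ((A ∩ cArc n (bstart i) (blen i)).card : ℝ)
  /-- (iv) every proper initial segment `[bᵢ,y] ⊊ Bᵢ` satisfies `|[bᵢ,y]| + 1 ≤ δ·|[bᵢ,y] ∩ A|` -/
  initial_seg : ∀ i, ∀ t : ℕ, t + 1 < blen i →
    ((cArc n (bstart i) (t + 1)).card : ℝ) + 1 ≤ δ * (((cArc n (bstart i) (t + 1)) ∩ A).card : ℝ)

namespace BlockStructure

variable {n : ℕ} [NeZero n] {δ : ℝ} {A : Finset (Fin n)}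

/-- The block `Bᵢ`. -/
def block (P : BlockStructure n δ A) (i : Fin P.k) : Finset (Fin n) :=
  cArc n (P.bstart i) (P.blen i)

open Fin.NatCast in
/-- The gap `Gᵢ`. -/
def gap (P : BlockStructure n δ A) (i : Fin P.k) : Finset (Fin n) :=
  cArc n (P.bstart i + (P.blen i : Fin n)) (P.glen i)

/-- `𝒢_δ(A) = G₁ ∪ ⋯ ∪ G_k`, the union of the gaps. -/
def gapsUnion (P : BlockStructure n δ A) : Finset (Fin n) :=
  Finset.univ.biUnion P.gap

/-- `f_δ(A) = A ∪ 𝒢_δ(A)`. -/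
def fset (P : BlockStructure n δ A) : Finset (Fin n) :=
  A ∪ P.gapsUnion

end BlockStructure


/-!
For a `d`-set `A` with block structure `P`, the gaps of `P` are exactly the points `w` such that
every arc `[a, w]` with `a ∈ A` contains fewer than one point of `A` in four (walk from `a` to `w`,
skipping the rest of each block met on the way). So `f₄(A)` does not depend on `P` and has `d + 3`
points. If `f₄(A) = insert x S`, then `S = f₄(A) \ {x}` lies in an interval `[A', f₄(A')]`: take
`A' = A` if `x ∉ A`, and otherwise trade `x` for the gap point closest to it counterclockwise.
Hence every one-point extension of an uncovered `(d + 2)`-set is uncovered, and since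
`2 (d + 2) < n`, the local LYM inequality and Hall's theorem choose these extensions injectively.
-/

open Finset
open scoped FinsetFamily

theorem card_insert_erase_inter_le {α : Type*} [DecidableEq α] {A C : Finset α} {y z : α}
    (hy : y ∈ A) (hzy : z ∈ C → y ∈ C) : #(insert z (A.erase y) ∩ C) ≤ #(A ∩ C) := by
  by_cases hz : z ∈ C
  · rw [insert_inter_of_mem hz, erase_inter]
    calc #(insert z ((A ∩ C).erase y)) ≤ #((A ∩ C).erase y) + 1 := card_insert_le _ _
      _ = #(A ∩ C) := card_erase_add_one (mem_inter.mpr ⟨hy, hzy hz⟩)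
  · rw [insert_inter_of_notMem hz, erase_inter]
    exact card_erase_le

theorem card_mul_le_card_upShadow_mul {α : Type*} [DecidableEq α] [Fintype α]
    {𝒜 : Finset (Finset α)} {r : ℕ} (h𝒜 : (𝒜 : Set (Finset α)).Sized r)
    (hr : r ≤ Fintype.card α) : #𝒜 * (Fintype.card α - r) ≤ #(∂⁺ 𝒜) * (r + 1) := by
  have h := local_lubell_yamamoto_meshalkin_inequality_mul h𝒜.compls
  rwa [shadow_compls, card_compls, card_compls, Nat.sub_sub_self hr] at h

theorem exists_injOn_insert_of_sized {α : Type*} [DecidableEq α] [Fintype α]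
    {𝒮 : Set (Finset α)} {r : ℕ} (h𝒮 : 𝒮.Sized r) (hr : 2 * r + 1 ≤ Fintype.card α) :
    ∃ φ : Finset α → Finset α, Set.InjOn φ 𝒮 ∧ ∀ S ∈ 𝒮, ∃ a ∉ S, insert a S = φ S := by
  classical
  have hall (s : Finset 𝒮) : #s ≤ #{T | ∃ S ∈ s, ∃ a ∉ S.val, insert a S.val = T} := by
    have hup : ({T | ∃ S ∈ s, ∃ a ∉ S.val, insert a S.val = T} : Finset (Finset α)) =
        ∂⁺ (s.map (Function.Embedding.subtype _)) := by
      ext T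
      simp [mem_upShadow_iff]
    have h := card_mul_le_card_upShadow_mul (𝒜 := s.map (Function.Embedding.subtype _))
      (fun S hS => by obtain ⟨S, -, rfl⟩ := mem_map.mp hS; exact h𝒮 S.2) (by omega)
    rw [card_map] at h
    rw [hup]
    exact Nat.le_of_mul_le_mul_right
      ((Nat.mul_le_mul_left _ (by omega : r + 1 ≤ Fintype.card α - r)).trans h) r.succ_pos
  obtain ⟨f, hf, hfS⟩ := (Fintype.all_card_le_filter_rel_iff_exists_injective _).mp hall
  refine ⟨fun S => if h : S ∈ 𝒮 then f ⟨S, h⟩ else S, fun S₁ h₁ S₂ h₂ h => ?_, fun S hS => ?_⟩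
  · exact congrArg Subtype.val (hf (by simpa [h₁, h₂] using h))
  · simpa [hS] using hfS ⟨S, hS⟩

open Fin.NatCast Fin.CommRing

section Arcs

variable {n : ℕ} [NeZero n]

theorem val_sub_natCast {x : Fin n} {t : ℕ} (ht : t ≤ x.val) : (x - t).val = x.val - t := by
  have ht' : ((t : Fin n) : ℕ) = t := Fin.val_cast_of_lt (ht.trans_lt x.isLt)
  rw [Fin.coe_sub_iff_le.mpr (Fin.le_def.mpr (ht'.symm ▸ ht)), ht']

theorem mem_cArc {s x : Fin n} {l : ℕ} : x ∈ cArc n s l ↔ ∃ t < l, s + t = x := by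
  simp only [cArc, mem_image, mem_range]

theorem mem_cArc_iff {s x : Fin n} {l : ℕ} : x ∈ cArc n s l ↔ (x - s).val < l := by
  rw [mem_cArc]
  constructor
  · rintro ⟨t, ht, rfl⟩
    rw [add_sub_cancel_left, Fin.val_natCast]
    exact (Nat.mod_le t n).trans_lt ht
  · exact fun h => ⟨(x - s).val, h, by rw [Fin.cast_val_eq_self]; ring⟩

theorem card_cArc {s : Fin n} {l : ℕ} (hl : l ≤ n) : #(cArc n s l) = l := by
  rw [cArc, card_image_of_injOn, card_range]
  intro a ha b hb hab
  have := congrArg Fin.val (add_left_cancel hab)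
  rwa [Fin.val_cast_of_lt ((mem_range.mp ha).trans_le hl),
    Fin.val_cast_of_lt ((mem_range.mp hb).trans_le hl)] at this

theorem cArc_one (s : Fin n) : cArc n s 1 = {s} := by
  ext x
  rw [mem_cArc_iff, mem_singleton, Nat.lt_one_iff, Fin.val_eq_zero_iff, sub_eq_zero]

theorem cArc_add (s : Fin n) (a b : ℕ) :
    cArc n s (a + b) = cArc n s a ∪ cArc n (s + a) b := by
  ext x
  simp only [cArc, mem_union, mem_image, mem_range]
  constructor
  · rintro ⟨t, ht, rfl⟩
    rcases lt_or_ge t a with h | h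
    · exact Or.inl ⟨t, h, rfl⟩
    · refine Or.inr ⟨t - a, by omega, ?_⟩
      rw [Nat.cast_sub h]
      ring
  · rintro (⟨t, ht, rfl⟩ | ⟨t, ht, rfl⟩)
    · exact ⟨t, by omega, rfl⟩
    · exact ⟨a + t, by omega, by push_cast; ring⟩

theorem disjoint_cArc_add {s : Fin n} {a b : ℕ} (hab : a + b ≤ n) :
    Disjoint (cArc n s a) (cArc n (s + a) b) := by
  have h := card_union_add_card_inter (cArc n s a) (cArc n (s + a) b)
  rw [← cArc_add, card_cArc hab, card_cArc (by omega), card_cArc (by omega)] at h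
  exact disjoint_iff_inter_eq_empty.mpr (card_eq_zero.mp (by omega))

theorem card_inter_cArc_add (X : Finset (Fin n)) {s : Fin n} {a b : ℕ} (hab : a + b ≤ n) :
    #(X ∩ cArc n s (a + b)) = #(X ∩ cArc n s a) + #(X ∩ cArc n (s + a) b) := by
  rw [cArc_add, inter_union_distrib_left]
  exact card_union_of_disjoint ((disjoint_cArc_add hab).mono inter_subset_right inter_subset_right)

theorem cArc_add_subset {s : Fin n} {u m l : ℕ} (h : u + m ≤ l) :
    cArc n (s + u) m ⊆ cArc n s l := by
  intro x hx
  obtain ⟨t, ht, rfl⟩ := mem_cArc.mp hx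
  exact mem_cArc.mpr ⟨u + t, by omega, by push_cast; ring⟩

def closedArc (a b : Fin n) : Finset (Fin n) :=
  cArc n a ((b - a).val + 1)

theorem mem_closedArc {a b x : Fin n} : x ∈ closedArc a b ↔ (x - a).val ≤ (b - a).val := by
  rw [closedArc, mem_cArc_iff, Nat.lt_succ_iff]

theorem card_closedArc (a b : Fin n) : #(closedArc a b) = (b - a).val + 1 :=
  card_cArc (b - a).isLt

theorem card_inter_closedArc (X : Finset (Fin n)) {a b : Fin n} {l : ℕ} (hl : l ≤ (b - a).val) :
    #(X ∩ closedArc a b) = #(X ∩ cArc n a l) + #(X ∩ closedArc (a + l) b) := by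
  have hb : (b - (a + l)).val = (b - a).val - l := by
    rw [← val_sub_natCast hl]; ring_nf
  rw [closedArc, closedArc, hb, ← card_inter_cArc_add X (by have := (b - a).isLt; omega)]
  congr 3
  omega

theorem val_sub_eq_sub_of_le {a x y : Fin n} (h : (x - a).val ≤ (y - a).val) :
    (y - x).val = (y - a).val - (x - a).val := by
  rw [← val_sub_natCast h, Fin.cast_val_eq_self, sub_sub_sub_cancel_right]

theorem mem_closedArc_of_sub_lt {a v y z : Fin n} (hz : z ∈ closedArc a v)
    (hzy : (y - z).val < (y - v).val) : y ∈ closedArc a v := by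
  rw [mem_closedArc] at hz ⊢
  by_contra! hy
  rw [val_sub_eq_sub_of_le (hz.trans hy.le), val_sub_eq_sub_of_le hy.le] at hzy
  omega

end Arcs

namespace BlockStructure

variable {n q : ℕ} [NeZero n] {A : Finset (Fin n)} (P : BlockStructure n q A)

theorem card_block (i : Fin P.k) : #(P.block i) = q * #(A ∩ P.block i) := by
  have hlb : (q : ℝ) * #(A ∩ P.block i) - 1 < #(P.block i) := P.density_lb i
  have hub : (#(P.block i) : ℝ) ≤ q * #(A ∩ P.block i) := P.density_ub i
  have hlb' : q * #(A ∩ P.block i) < #(P.block i) + 1 := by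
    exact_mod_cast (by linarith : (q : ℝ) * #(A ∩ P.block i) < #(P.block i) + 1)
  have hub' : #(P.block i) ≤ q * #(A ∩ P.block i) := by exact_mod_cast hub
  omega

theorem disjoint_gapsUnion : Disjoint A P.gapsUnion :=
  (disjoint_biUnion_right _ _ _).mpr fun i _ => (P.gap_inter i).symm

theorem subset_biUnion_block : A ⊆ univ.biUnion P.block := by
  intro x hx
  rcases P.cover x with ⟨i, hi⟩ | ⟨i, hi⟩
  · exact mem_biUnion.mpr ⟨i, mem_univ i, hi⟩
  · exact absurd hx (disjoint_left.mp (P.gap_inter i) hi)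

theorem card_biUnion_block : #(univ.biUnion P.block) = q * #A := by
  have hdisj : ((univ : Finset (Fin P.k)) : Set (Fin P.k)).PairwiseDisjoint P.block :=
    fun i _ j _ hij => P.block_disj i j hij
  have hA : #A = ∑ i, #(A ∩ P.block i) := by
    rw [← card_biUnion (hdisj.mono fun _ => inter_subset_right), ← inter_biUnion,
      inter_eq_left.mpr P.subset_biUnion_block]
  rw [card_biUnion hdisj, hA, mul_sum]
  exact sum_congr rfl fun i _ => P.card_block i

theorem card_gapsUnion : #P.gapsUnion = n - q * #A := by
  have hcover : univ.biUnion P.block ∪ P.gapsUnion = univ := by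
    refine eq_univ_of_forall fun x => ?_
    rcases P.cover x with ⟨i, hi⟩ | ⟨i, hi⟩
    · exact mem_union_left _ (mem_biUnion.mpr ⟨i, mem_univ i, hi⟩)
    · exact mem_union_right _ (mem_biUnion.mpr ⟨i, mem_univ i, hi⟩)
  have hdisj : Disjoint (univ.biUnion P.block) P.gapsUnion :=
    (disjoint_biUnion_left _ _ _).mpr fun i _ =>
      (disjoint_biUnion_right _ _ _).mpr fun j _ => P.block_gap_disj i j
  have h := congrArg card hcover
  rw [card_union_of_disjoint hdisj, card_biUnion_block, card_univ, Fintype.card_fin] at h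
  omega

theorem lt_card_inter_cArc_bstart (i : Fin P.k) {l : ℕ} (hl0 : 0 < l) (hl : l < P.blen i)
    (hln : l ≤ n) : l < q * #(A ∩ cArc n (P.bstart i) l) := by
  have h := P.initial_seg i (l - 1) (by omega)
  rw [Nat.sub_add_cancel hl0, card_cArc hln, inter_comm] at h
  exact_mod_cast (by linarith : (l : ℝ) < q * #(A ∩ cArc n (P.bstart i) l))

theorem card_inter_cArc_suffix_le (i : Fin P.k) {u : ℕ} (hu : u < P.blen i) (hn : P.blen i ≤ n) :
    q * #(A ∩ cArc n (P.bstart i + u) (P.blen i - u)) ≤ P.blen i - u := by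
  have hsplit := card_inter_cArc_add A (s := P.bstart i) (a := u) (b := P.blen i - u) (by omega)
  have hblock := P.card_block i
  rw [Nat.add_sub_cancel' hu.le] at hsplit
  rw [block, card_cArc hn, hsplit, mul_add] at hblock
  rcases Nat.eq_zero_or_pos u with rfl | hu0
  · omega
  · have := P.lt_card_inter_cArc_bstart i hu0 hu (by omega)
    omega

theorem notMem_block_of_mem_gapsUnion {y : Fin n} (hy : y ∈ P.gapsUnion) (i : Fin P.k) :
    y ∉ P.block i := by
  obtain ⟨j, -, hj⟩ := mem_biUnion.mp hy
  exact disjoint_right.mp (P.block_gap_disj i j) hj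

theorem exists_step_toward_gap {x y : Fin n} (hy : y ∈ P.gapsUnion) (hxy : x ≠ y) :
    ∃ l, 0 < l ∧ l ≤ (y - x).val ∧ q * #(A ∩ cArc n x l) ≤ l := by
  by_cases hx : x ∈ A
  · obtain ⟨i, -, hi⟩ := mem_biUnion.mp (P.subset_biUnion_block hx)
    have hyi := P.notMem_block_of_mem_gapsUnion hy i
    have hn : P.blen i ≤ n := by
      by_contra! h
      exact hyi (mem_cArc_iff.mpr ((y - P.bstart i).isLt.trans h))
    obtain ⟨u, hu, rfl⟩ := mem_cArc.mp hi
    refine ⟨P.blen i - u, by omega, ?_, P.card_inter_cArc_suffix_le i hu hn⟩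
    by_contra! h
    exact hyi (cArc_add_subset (Nat.add_sub_cancel' hu.le).le (mem_cArc_iff.mpr h))
  · refine ⟨1, one_pos, Nat.one_le_iff_ne_zero.mpr ?_, ?_⟩
    · rwa [Ne, Fin.val_eq_zero_iff, sub_eq_zero, eq_comm]
    · rw [cArc_one, inter_singleton_of_notMem hx, card_empty, mul_zero]
      exact zero_le_one

theorem card_inter_closedArc_lt_of_mem_gapsUnion {y : Fin n} (hy : y ∈ P.gapsUnion) (x : Fin n) :
    q * #(A ∩ closedArc x y) < #(closedArc x y) := by
  induction hm : (y - x).val using Nat.strong_induction_on generalizing x with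
  | _ m ih =>
  rw [card_closedArc, hm]
  by_cases hxy : x = y
  · have hyA : y ∉ A := disjoint_right.mp P.disjoint_gapsUnion hy
    rw [hxy, closedArc, sub_self, Fin.val_zero, cArc_one, inter_singleton_of_notMem hyA]
    simp
  · obtain ⟨l, hl0, hlm, hl⟩ := P.exists_step_toward_gap hy hxy
    have hrest : (y - (x + l)).val = m - l := by
      rw [← hm, ← val_sub_natCast hlm]; ring_nf
    have := ih _ (by omega) (x + l) hrest
    rw [card_closedArc, hrest] at this
    rw [card_inter_closedArc A hlm, mul_add]
    omega

theorem mem_gapsUnion_of_card_inter_closedArc_lt {w : Fin n}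
    (hw : ∀ a ∈ A, q * #(A ∩ closedArc a w) < #(closedArc a w)) : w ∈ P.gapsUnion := by
  rcases P.cover w with ⟨i, hi⟩ | ⟨i, hi⟩
  · exfalso
    have hu : (w - P.bstart i).val < P.blen i := mem_cArc_iff.mp hi
    have h := hw _ (P.start_mem i)
    rw [card_closedArc, closedArc] at h
    rcases (show _ + 1 ≤ _ from hu).lt_or_eq with hlt | heq
    · have := P.lt_card_inter_cArc_bstart i (by omega) hlt (w - P.bstart i).isLt
      omega
    · have := P.card_block i
      rw [block, ← heq, card_cArc (w - P.bstart i).isLt] at this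
      omega
  · exact mem_biUnion.mpr ⟨i, mem_univ i, hi⟩

theorem gapsUnion_subset (P' : BlockStructure n q A) : P.gapsUnion ⊆ P'.gapsUnion :=
  fun _ hw => P'.mem_gapsUnion_of_card_inter_closedArc_lt fun a _ =>
    P.card_inter_closedArc_lt_of_mem_gapsUnion hw a

/-- Trading `y ∈ A` for the gap point `z` closest to `y` counterclockwise keeps every other gap
point a gap point: an arc ending at such a point that contains `z` also contains `y`. -/
theorem exists_gapsUnion_erase_subset {y : Fin n} (hy : y ∈ A) (hG : P.gapsUnion.Nonempty) :
    ∃ z ∈ P.gapsUnion, ∀ P' : BlockStructure n q (insert z (A.erase y)),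
      P.gapsUnion.erase z ⊆ P'.gapsUnion := by
  obtain ⟨z, hz, hzmin⟩ := exists_min_image P.gapsUnion (fun w => (y - w).val) hG
  refine ⟨z, hz, fun P' v hv => P'.mem_gapsUnion_of_card_inter_closedArc_lt fun a _ => ?_⟩
  obtain ⟨hvz, hv⟩ := mem_erase.mp hv
  have hzv : (y - z).val < (y - v).val := (hzmin v hv).lt_of_ne fun h =>
    hvz (sub_right_injective (Fin.val_injective h)).symm
  calc q * #(insert z (A.erase y) ∩ closedArc a v) ≤ q * #(A ∩ closedArc a v) :=
        Nat.mul_le_mul_left _ (card_insert_erase_inter_le hy fun hza =>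
          mem_closedArc_of_sub_lt hza hzv)
    _ < #(closedArc a v) := P.card_inter_closedArc_lt_of_mem_gapsUnion hv a

theorem exists_subset_fset_erase (hG : P.gapsUnion.Nonempty) (y : Fin n) :
    ∃ A', #A' = #A ∧ A' ⊆ P.fset.erase y ∧
      ∀ P' : BlockStructure n q A', P.fset.erase y ⊆ P'.fset := by
  by_cases hy : y ∈ A
  · obtain ⟨z, hz, hsub⟩ := P.exists_gapsUnion_erase_subset hy hG
    have hzA : z ∉ A := disjoint_right.mp P.disjoint_gapsUnion hz
    refine ⟨insert z (A.erase y), ?_, ?_, fun P' v hv => ?_⟩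
    · rw [card_insert_of_notMem fun h => hzA (mem_of_mem_erase h), card_erase_add_one hy]
    · have hzy : z ≠ y := (ne_of_mem_of_not_mem hy hzA).symm
      exact insert_subset (mem_erase.mpr ⟨hzy, mem_union_right _ hz⟩)
        (erase_subset_erase y subset_union_left)
    · obtain ⟨hvy, hv⟩ := mem_erase.mp hv
      rcases mem_union.mp hv with hvA | hvG
      · exact mem_union_left _ (mem_insert_of_mem (mem_erase.mpr ⟨hvy, hvA⟩))
      · by_cases hvz : v = z
        · exact mem_union_left _ (hvz ▸ mem_insert_self v _)
        · exact mem_union_right _ (hsub P' (mem_erase.mpr ⟨hvz, hvG⟩))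
  · refine ⟨A, rfl, fun a ha => mem_erase.mpr ⟨ne_of_mem_of_not_mem ha hy, mem_union_left _ ha⟩,
      fun P' => (erase_subset y _).trans (union_subset_union_right (P.gapsUnion_subset P'))⟩

end BlockStructure

theorem mem_fInterval {n : ℕ} {A B C : Finset (Fin n)} : C ∈ fInterval A B ↔ A ⊆ C ∧ C ⊆ B := by
  rw [fInterval, mem_filter, mem_powerset, and_comm]

theorem insert_notMem_fInterval {n d : ℕ} {F : Finset (Fin n) → Finset (Fin n)}
    {S : Finset (Fin n)} {x : Fin n} (hF : ∀ A, #A = d → #(F A) ≤ #S + 1)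
    (hexch : ∀ A, #A = d → ∀ y, ∃ A', #A' = d ∧ A' ⊆ (F A).erase y ∧ (F A).erase y ⊆ F A')
    (hS : ∀ A, #A = d → S ∉ fInterval A (F A)) (hx : x ∉ S) (A : Finset (Fin n)) (hA : #A = d) :
    insert x S ∉ fInterval A (F A) := by
  intro hmem
  have heq : insert x S = F A := eq_of_subset_of_card_le (mem_fInterval.mp hmem).2
    (by rw [card_insert_of_notMem hx]; exact hF A hA)
  obtain ⟨A', hA', hsub, hsup⟩ := hexch A hA x
  rw [← heq, erase_insert hx] at hsub hsup
  exact hS A' hA' (mem_fInterval.mpr ⟨hsub, hsup⟩)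

/-- Let `d` be a positive integer and `n = 4d + 3`. For `i ∈ {1,2}`, let
`𝒱ᵢ` be the family of subsets of `[n]` of cardinality `d + i + 1` not contained in any
interval `[A, f_4(A)]` with `A` a `d`-subset of `[n]`. Then there is an injection
`φ : 𝒱₁ → 𝒱₂` with `S ⊆ φ(S)` for all `S ∈ 𝒱₁`. Here `F` assigns to each `d`-subset `A`
the set `f_4(A)` coming from a block structure of `A` with density `4`. -/
theorem matching_uncovered_sets (d n : ℕ) (hd : 0 < d) (hn : n = 4 * d + 3) [NeZero n]
    (F : Finset (Fin n) → Finset (Fin n))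
    (hF : ∀ A : Finset (Fin n), A.card = d → ∃ P : BlockStructure n (4 : ℝ) A, F A = P.fset) :
    ∃ φ : Finset (Fin n) → Finset (Fin n),
      Set.InjOn φ {S : Finset (Fin n) |
        S.card = d + 2 ∧ ∀ A : Finset (Fin n), A.card = d → S ∉ fInterval A (F A)} ∧
      ∀ S : Finset (Fin n),
        (S.card = d + 2 ∧ ∀ A : Finset (Fin n), A.card = d → S ∉ fInterval A (F A)) →
          S ⊆ φ S ∧ (φ S).card = d + 3 ∧
            ∀ A : Finset (Fin n), A.card = d → φ S ∉ fInterval A (F A) := by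
  have hgaps (A : Finset (Fin n)) (P : BlockStructure n 4 A) (hA : #A = d) :
      #P.gapsUnion = 3 := by
    have h : #P.gapsUnion = n - 4 * #A := P.card_gapsUnion
    rw [h, hA, hn]
    omega
  have hcard (A : Finset (Fin n)) (hA : #A = d) : #(F A) = d + 3 := by
    obtain ⟨P, hP⟩ := hF A hA
    rw [hP, BlockStructure.fset, card_union_of_disjoint P.disjoint_gapsUnion, hA, hgaps A P hA]
  have hexch (A : Finset (Fin n)) (hA : #A = d) (y : Fin n) :
      ∃ A', #A' = d ∧ A' ⊆ (F A).erase y ∧ (F A).erase y ⊆ F A' := by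
    obtain ⟨P, hP⟩ := hF A hA
    obtain ⟨A', hA', hsub, hsup⟩ :=
      P.exists_subset_fset_erase (card_pos.mp (by rw [hgaps A P hA]; omega)) y
    obtain ⟨P', hP'⟩ := hF A' (hA'.trans hA)
    exact ⟨A', hA'.trans hA, hP ▸ hsub, hP ▸ hP' ▸ hsup P'⟩
  obtain ⟨φ, hinj, hφ⟩ := exists_injOn_insert_of_sized (r := d + 2)
    (𝒮 := {S | #S = d + 2 ∧ ∀ A : Finset (Fin n), #A = d → S ∉ fInterval A (F A)})
    (fun S hS => hS.1) (by rw [Fintype.card_fin]; omega)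
  refine ⟨φ, hinj, fun S hS => ?_⟩
  obtain ⟨x, hx, hφS⟩ := hφ S hS
  rw [← hφS, card_insert_of_notMem hx, hS.1]
  exact ⟨subset_insert x S, rfl, insert_notMem_fInterval (fun A hA => (hcard A hA).trans_le
    (by rw [hS.1])) hexch hS.2 hx⟩
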